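/- For every real number x > 0 and every α with 0 < α < 1, one has α · x^(α-1) = (sin(απ)/π) · ∫_0^∞ t^α/(x+t)^2 dt. -/

import Mathlib

open MeasureTheory Real

-- Beta value: ∫_0^1 u^α (1-u)^(-α) du = α π / sin(πα)
lemma aux_beta (α : ℝ) (hα : 0 < α) (hα1 : α < 1) :
    ∫ u in (0:ℝ)..1, u ^ α * (1 - u) ^ (-α) = α * (Real.pi / Real.sin (Real.pi * α)) := by
  have h1 : (0:ℝ) < α + 1 := by linarith
  have h2 : (0:ℝ) < 1 - α := by linarith
  have hca : (0:ℝ) < (((α:ℂ)+1).re) := by simpa using h1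
  have hcb : (0:ℝ) < ((1-(α:ℂ)).re) := by simpa using h2
  have key := Complex.Gamma_mul_Gamma_eq_betaIntegral hca hcb
  have hsum : (α:ℂ) + 1 + (1 - (α:ℂ)) = 2 := by ring
  have hg2 : Complex.Gamma 2 = 1 := by
    rw [(by norm_num : (2:ℂ) = ((2:ℝ):ℂ)), Complex.Gamma_ofReal, Real.Gamma_two]; norm_num
  rw [hsum, hg2, one_mul] at key
  -- betaIntegral equals ofReal of the real integral
  have hbi : Complex.betaIntegral ((α:ℂ)+1) (1-(α:ℂ))
      = ((∫ u in (0:ℝ)..1, u ^ α * (1 - u) ^ (-α) : ℝ) : ℂ) := by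
    rw [Complex.betaIntegral]
    rw [← intervalIntegral.integral_ofReal]
    refine intervalIntegral.integral_congr fun u hu => ?_
    rw [Set.uIcc_of_le (by norm_num : (0:ℝ) ≤ 1)] at hu
    obtain ⟨hu0, hu1⟩ := hu
    have h1u : (0:ℝ) ≤ 1 - u := by linarith
    push_cast
    rw [Complex.ofReal_cpow hu0, Complex.ofReal_cpow h1u]
    push_cast
    ring_nf
  rw [hbi] at key
  have hgl : Complex.Gamma ((α:ℂ)+1) = ((Real.Gamma (α+1) : ℝ) : ℂ) := by
    rw [← Complex.Gamma_ofReal]; push_cast; ring_nf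
  have hgr : Complex.Gamma (1-(α:ℂ)) = ((Real.Gamma (1-α) : ℝ) : ℂ) := by
    rw [← Complex.Gamma_ofReal]; push_cast; ring_nf
  rw [hgl, hgr, ← Complex.ofReal_mul] at key
  have := Complex.ofReal_injective key.symm
  rw [this, Real.Gamma_add_one hα.ne', mul_assoc, Real.Gamma_mul_Gamma_one_sub]

lemma aux_cov (α : ℝ) (hα : 0 < α) (hα1 : α < 1) :
    ∫ t in Set.Ioi (0:ℝ), t ^ α / (1 + t) ^ 2
      = ∫ u in (0:ℝ)..1, u ^ α * (1 - u) ^ (-α) := by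
  have himg : (fun u : ℝ => u / (1 - u)) '' Set.Ioo 0 1 = Set.Ioi 0 := by
    ext t
    constructor
    · rintro ⟨u, ⟨hu0, hu1⟩, rfl⟩
      exact div_pos hu0 (by linarith)
    · intro ht
      refine ⟨t / (1 + t), ⟨div_pos ht (by linarith [Set.mem_Ioi.mp ht]), ?_⟩, ?_⟩
      · rw [div_lt_one (by linarith [Set.mem_Ioi.mp ht])]; linarith [Set.mem_Ioi.mp ht]
      · have h1t : (0:ℝ) < 1 + t := by linarith [Set.mem_Ioi.mp ht]
        field_simp
        ring
  have hderiv : ∀ u ∈ Set.Ioo (0:ℝ) 1, HasDerivWithinAt (fun u : ℝ => u / (1 - u))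
      (((1 - u) ^ 2)⁻¹) (Set.Ioo 0 1) u := by
    intro u ⟨hu0, hu1⟩
    have h1u : (1:ℝ) - u ≠ 0 := by intro h; linarith [(by linarith : (1:ℝ) - u > 0)]
    have := (hasDerivAt_id u).div ((hasDerivAt_id u).const_sub 1) h1u
    have e : ((1 - u) ^ 2)⁻¹ = (1 * (1 - id u) - id u * -1) / (1 - id u) ^ 2 := by
      simp only [id]; rw [inv_eq_one_div]; congr 1; ring
    rw [e]
    exact this.hasDerivWithinAt
  have hinj : Set.InjOn (fun u : ℝ => u / (1 - u)) (Set.Ioo 0 1) := by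
    intro a ⟨ha0, ha1⟩ b ⟨hb0, hb1⟩ hab
    have ha : (1:ℝ) - a ≠ 0 := by linarith
    have hb : (1:ℝ) - b ≠ 0 := by linarith
    field_simp at hab
    linarith
  have := MeasureTheory.integral_image_eq_integral_abs_deriv_smul measurableSet_Ioo hderiv hinj
    (fun t => t ^ α / (1 + t) ^ 2)
  rw [himg] at this
  rw [this, intervalIntegral.integral_of_le (by norm_num : (0:ℝ) ≤ 1),
    MeasureTheory.integral_Ioc_eq_integral_Ioo]
  refine MeasureTheory.setIntegral_congr_fun measurableSet_Ioo fun u ⟨hu0, hu1⟩ => ?_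
  have h1u : (0:ℝ) < 1 - u := by linarith
  have hne : (1:ℝ) - u ≠ 0 := h1u.ne'
  have hpa : (0:ℝ) < (1 - u) ^ α := Real.rpow_pos_of_pos h1u α
  have e1 : 1 + u / (1 - u) = (1 - u)⁻¹ := by field_simp; ring
  rw [smul_eq_mul, abs_of_pos (by positivity), e1,
    Real.div_rpow hu0.le h1u.le, Real.rpow_neg h1u.le]
  field_simp

theorem power_deriv_integral_representation (x α : ℝ) (hx : 0 < x) (hα : 0 < α) (hα1 : α < 1) :
    α * x ^ (α - 1) = (Real.sin (α * Real.pi) / Real.pi) *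
      ∫ t in Set.Ioi (0:ℝ), t ^ α / (x + t) ^ 2 := by
  have hscale : (∫ t in Set.Ioi (0:ℝ), t ^ α / (x + t) ^ 2)
      = x ^ (α - 1) * ∫ s in Set.Ioi (0:ℝ), s ^ α / (1 + s) ^ 2 := by
    have h := MeasureTheory.integral_comp_mul_left_Ioi
      (fun t => t ^ α / (x + t) ^ 2) 0 hx
    rw [mul_zero] at h
    have h2 : (∫ s in Set.Ioi (0:ℝ), (x * s) ^ α / (x + x * s) ^ 2)
        = ∫ s in Set.Ioi (0:ℝ), x ^ (α - 2) * (s ^ α / (1 + s) ^ 2) := by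
      refine MeasureTheory.setIntegral_congr_fun measurableSet_Ioi fun s hs => ?_
      have hs0 : (0:ℝ) < s := hs
      have h1s : (0:ℝ) < 1 + s := by linarith
      have e1 : x + x * s = x * (1 + s) := by ring
      rw [e1, Real.mul_rpow hx.le hs0.le, mul_pow,
        Real.rpow_sub hx, (by rw [Real.rpow_two] : x ^ (2:ℝ) = x ^ 2)]
      field_simp
    rw [h2, MeasureTheory.integral_const_mul] at h
    have := congrArg (fun y => x * y) h.symm
    simp only [smul_eq_mul, ← mul_assoc] at this
    rw [mul_inv_cancel₀ hx.ne', one_mul] at this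
    rw [this]
    congr 1
    nth_rewrite 1 [← Real.rpow_one x]
    rw [← Real.rpow_add hx]
    ring_nf
  rw [hscale, aux_cov α hα hα1, aux_beta α hα hα1]
  have hsin : Real.sin (α * Real.pi) > 0 :=
    Real.sin_pos_of_pos_of_lt_pi (by positivity) (by nlinarith [Real.pi_pos])
  rw [mul_comm Real.pi α, mul_comm α Real.pi] at *
  have hsin' : Real.sin (α * Real.pi) ≠ 0 := by rw [mul_comm]; exact hsin.ne'
  field_simp
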